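/- arXiv:2310.17380 — 2 statements merged into one kernel-verified Lean document; each statement's English description precedes it below -/
import Mathlib

section
/- Let M be a module over a commutative ring R and t₁,…,t_k a sequence of elements that forms a regular sequence on M in every order (e.g. M is t-regular with respect to the divisor with components t_i). Then ⋂_{i=1}^k t_iM = (t₁t₂⋯t_k)M. -/
/-!
If `b` is regular on `M ⧸ aM`, then `aM ∩ bM = abM`: from `an = bm` we get `m ∈ aM`.
Regularity in every order makes each `t_j` regular on `M ⧸ t_iM` for `i ≠ j`, hence so is the
product of the `t_j` with `j ≠ i`, and induction over the index set gives the claim.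
-/

open Submodule RingTheory.Sequence
open scoped Pointwise

section

variable {R : Type*} [CommRing R] {M : Type*} [AddCommGroup M] [Module R M]

theorem range_lsmul_eq_smul_top (r : R) :
    LinearMap.range (LinearMap.lsmul R M r) = r • (⊤ : Submodule R M) := by
  ext x
  simp [mem_smul_pointwise_iff_exists]

theorem range_lsmul_inf_range_lsmul_eq_mul {a b : R} (hb : IsSMulRegular (QuotSMulTop a M) b) :
    LinearMap.range (LinearMap.lsmul R M a) ⊓ LinearMap.range (LinearMap.lsmul R M b) =
      LinearMap.range (LinearMap.lsmul R M (a * b)) := by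
  refine le_antisymm ?_ (le_inf ?_ ?_)
  · rintro x ⟨⟨n, rfl⟩, ⟨m, hm⟩⟩
    simp only [LinearMap.lsmul_apply] at hm ⊢
    have hm_zero : (Submodule.Quotient.mk m : QuotSMulTop a M) = 0 := by
      refine hb.right_eq_zero_of_smul ?_
      rw [← Submodule.Quotient.mk_smul, hm, Submodule.Quotient.mk_eq_zero,
        ← range_lsmul_eq_smul_top]
      exact ⟨n, rfl⟩
    rw [Submodule.Quotient.mk_eq_zero, ← range_lsmul_eq_smul_top] at hm_zero
    obtain ⟨u, rfl⟩ := hm_zero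
    exact ⟨u, by simp [← hm, mul_smul, smul_comm b a u]⟩
  · rintro _ ⟨m, rfl⟩
    exact ⟨b • m, by simp only [LinearMap.lsmul_apply, mul_smul]⟩
  · rintro _ ⟨m, rfl⟩
    exact ⟨a • m, by simp only [LinearMap.lsmul_apply, mul_smul, smul_comm b a m]⟩

theorem iInf_range_lsmul_eq_range_lsmul_prod {ι : Type*} [DecidableEq ι] (s : Finset ι)
    (t : ι → R)
    (ht : ∀ i ∈ s, ∀ j ∈ s, i ≠ j → IsSMulRegular (QuotSMulTop (t i) M) (t j)) :
    ⨅ i ∈ s, LinearMap.range (LinearMap.lsmul R M (t i)) =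
      LinearMap.range (LinearMap.lsmul R M (∏ i ∈ s, t i)) := by
  induction s using Finset.induction_on with
  | empty => simpa using (LinearMap.range_eq_top.2 fun x => ⟨x, one_smul R x⟩).symm
  | insert a s ha ih =>
    have hprod : IsSMulRegular (QuotSMulTop (t a) M) (∏ i ∈ s, t i) :=
      Finset.prod_induction _ _ (fun _ _ => .mul) (.one _) fun j hj =>
        ht a (s.mem_insert_self a) j (Finset.mem_insert_of_mem hj)
          (ne_of_mem_of_not_mem hj ha).symm
    rw [Finset.iInf_insert, Finset.prod_insert ha, ih fun i hi j hj =>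
      ht i (Finset.mem_insert_of_mem hi) j (Finset.mem_insert_of_mem hj)]
    exact range_lsmul_inf_range_lsmul_eq_mul hprod

theorem RingTheory.Sequence.IsWeaklyRegular.isSMulRegular_quotSMulTop_of_cons_cons {a b : R}
    {l : List R} (h : IsWeaklyRegular M (a :: b :: l)) : IsSMulRegular (QuotSMulTop a M) b :=
  ((isWeaklyRegular_cons_iff _ _ _).1 ((isWeaklyRegular_cons_iff M a _).1 h).2).1

theorem Fin.exists_perm_apply_zero_apply_one {n : ℕ} {i j : Fin (n + 2)} (hij : i ≠ j) :
    ∃ σ : Equiv.Perm (Fin (n + 2)), σ 0 = i ∧ σ 1 = j := by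
  refine ⟨Equiv.swap 1 (Equiv.swap 0 i j) |>.trans (Equiv.swap 0 i), ?_, ?_⟩
  · have : Equiv.swap 0 i j ≠ 0 := by
      rw [Ne, Equiv.swap_apply_eq_iff, Equiv.swap_apply_left]; exact hij.symm
    simp [Equiv.swap_apply_of_ne_of_ne Fin.zero_ne_one this.symm]
  · simp

theorem isSMulRegular_quotSMulTop_of_forall_perm {k : ℕ} {t : Fin k → R}
    (hreg : ∀ σ : Equiv.Perm (Fin k), IsWeaklyRegular M (List.ofFn (t ∘ σ)))
    {i j : Fin k} (hij : i ≠ j) : IsSMulRegular (QuotSMulTop (t i) M) (t j) := by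
  obtain ⟨n, rfl⟩ : ∃ n, k = n + 2 :=
    ⟨k - 2, by have := i.isLt; have := j.isLt; have := Fin.val_ne_of_ne hij; omega⟩
  obtain ⟨σ, rfl, rfl⟩ := Fin.exists_perm_apply_zero_apply_one hij
  have h := hreg σ
  rw [List.ofFn_succ, List.ofFn_succ] at h
  exact h.isSMulRegular_quotSMulTop_of_cons_cons

end

/-- Let `M` be a module over a commutative ring `R` and `t₁, …, t_k` a
sequence of elements that forms a regular sequence on `M` in every order.  Then
`⋂_{i=1}^k t_iM = (t₁t₂⋯t_k)M`. -/
theorem stmt_7 {R : Type*} [CommRing R] {M : Type*} [AddCommGroup M] [Module R M]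
    (k : ℕ) (t : Fin k → R)
    -- the sequence is `M`-regular in every order
    (hreg : ∀ σ : Equiv.Perm (Fin k),
        RingTheory.Sequence.IsWeaklyRegular M (List.ofFn (t ∘ σ))) :
    (⨅ i : Fin k, LinearMap.range (LinearMap.lsmul R M (t i))) =
      LinearMap.range (LinearMap.lsmul R M (∏ i, t i)) := by
  simpa using iInf_range_lsmul_eq_range_lsmul_prod Finset.univ t fun i _ j _ hij =>
    isSMulRegular_quotSMulTop_of_forall_perm hreg hij
end

section
/- Let M be a module over a commutative ring, and t₁, t₂ two elements forming a regular sequence on M in both orders with each t_i a nonzerodivisor on M. Then in the localization M[1/(t₁t₂)], one has t₁^{-a}t₂^{-b}M ∩ t₁^{-a'}t₂^{-b'}M = t₁^{-min(a,a')}t₂^{-min(b,b')}M for all integers a, b, a', b'. -/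
open Pointwise

private lemma aux_mem {R : Type*} [CommRing R] {M : Type*} [AddCommGroup M] [Module R M]
    (t : R) (x : M) : x ∈ (Ideal.span {t} • ⊤ : Submodule R M) ↔ ∃ w, t • w = x := by
  rw [Submodule.ideal_span_singleton_smul]
  constructor
  · intro h
    rw [← SetLike.mem_coe, Submodule.coe_pointwise_smul] at h
    obtain ⟨y, -, hy⟩ := h
    exact ⟨y, hy⟩
  · rintro ⟨w, rfl⟩
    exact Submodule.smul_mem_pointwise_smul w t ⊤ trivial

private lemma aux_base {R : Type*} [CommRing R] {M : Type*} [AddCommGroup M] [Module R M]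
    {t₁ t₂ : R} (ht₂ : IsSMulRegular M t₂)
    (ht₂₁ : IsSMulRegular (M ⧸ (Ideal.span {t₂} • ⊤ : Submodule R M)) t₁)
    (m : ℕ) (u v : M) (h : t₁ ^ m • u = t₂ • v) : ∃ w, u = t₂ • w ∧ v = t₁ ^ m • w := by
  have h0 : t₁ ^ m • (Submodule.Quotient.mk u : M ⧸ (Ideal.span {t₂} • ⊤ : Submodule R M))
      = t₁ ^ m • (0 : M ⧸ (Ideal.span {t₂} • ⊤ : Submodule R M)) := by
    rw [smul_zero, ← Submodule.Quotient.mk_smul, h, Submodule.Quotient.mk_eq_zero]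
    exact Submodule.smul_mem_smul (Ideal.mem_span_singleton_self t₂) trivial
  have hu : u ∈ (Ideal.span {t₂} • ⊤ : Submodule R M) := by
    rw [← Submodule.Quotient.mk_eq_zero]
    exact (ht₂₁.pow m) h0
  obtain ⟨w, rfl⟩ := (aux_mem t₂ u).mp hu
  have h2 : t₂ • v = t₂ • (t₁ ^ m • w) := by
    rw [← h, smul_smul, smul_smul, mul_comm]
  exact ⟨w, rfl, ht₂ h2⟩

private lemma aux_core {R : Type*} [CommRing R] {M : Type*} [AddCommGroup M] [Module R M]
    {t₁ t₂ : R} (ht₂ : IsSMulRegular M t₂)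
    (ht₂₁ : IsSMulRegular (M ⧸ (Ideal.span {t₂} • ⊤ : Submodule R M)) t₁)
    (m n : ℕ) : ∀ u v : M, t₁ ^ m • u = t₂ ^ n • v →
      ∃ w, t₂ ^ n • v = (t₁ ^ m * t₂ ^ n) • w := by
  induction n with
  | zero => intro u v h; exact ⟨u, by simpa [mul_smul] using h.symm⟩
  | succ n ih =>
    intro u v h
    rw [pow_succ', mul_smul] at h
    obtain ⟨w, -, hw⟩ := aux_base ht₂ ht₂₁ m u (t₂ ^ n • v) h
    obtain ⟨w', hw'⟩ := ih w v hw.symm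
    refine ⟨w', ?_⟩
    rw [pow_succ', mul_smul, hw', smul_smul]
    congr 1; ring

private lemma aux_max_le {R : Type*} [CommRing R] {M : Type*} [AddCommGroup M] [Module R M]
    {t₁ t₂ : R} (ht₁ : IsSMulRegular M t₁) (ht₂ : IsSMulRegular M t₂)
    (ht₂₁ : IsSMulRegular (M ⧸ (Ideal.span {t₂} • ⊤ : Submodule R M)) t₁)
    (k l k' l' : ℕ) (hk : k ≤ k') (u v : M)
    (h : (t₁ ^ k * t₂ ^ l) • u = (t₁ ^ k' * t₂ ^ l') • v) :
    ∃ w, (t₁ ^ k * t₂ ^ l) • u = (t₁ ^ max k k' * t₂ ^ max l l') • w := by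
  rcases le_total l l' with hl | hl
  · exact ⟨v, by rw [max_eq_right hk, max_eq_right hl, h]⟩
  · have A : t₁ ^ k * t₂ ^ l' * t₂ ^ (l - l') = t₁ ^ k * t₂ ^ l := by
      rw [mul_assoc, ← pow_add, Nat.add_sub_cancel' hl]
    have hk2 : t₁ ^ k' = t₁ ^ k * t₁ ^ (k' - k) := by
      rw [← pow_add, Nat.add_sub_cancel' hk]
    have B : t₁ ^ k * t₂ ^ l' * t₁ ^ (k' - k) = t₁ ^ k' * t₂ ^ l' := by
      rw [hk2]; ring
    have h2 : (t₁ ^ k * t₂ ^ l') • (t₂ ^ (l - l') • u)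
        = (t₁ ^ k * t₂ ^ l') • (t₁ ^ (k' - k) • v) := by
      rw [smul_smul, smul_smul, A, B]; exact h
    have h3 := ((ht₁.pow k).mul (ht₂.pow l')) h2
    obtain ⟨w, hw⟩ := aux_core ht₂ ht₂₁ (k' - k) (l - l') v u h3.symm
    refine ⟨w, ?_⟩
    rw [max_eq_right hk, max_eq_left hl]
    calc (t₁ ^ k * t₂ ^ l) • u = (t₁ ^ k * t₂ ^ l') • (t₂ ^ (l - l') • u) := by
          rw [smul_smul, A]
      _ = (t₁ ^ k * t₂ ^ l') • ((t₁ ^ (k' - k) * t₂ ^ (l - l')) • w) := by rw [hw]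
      _ = (t₁ ^ k' * t₂ ^ l) • w := by
          rw [smul_smul]; congr 1
          rw [hk2, show t₂ ^ l = t₂ ^ l' * t₂ ^ (l - l') from by
            rw [← pow_add, Nat.add_sub_cancel' hl]]
          ring

private lemma aux_max {R : Type*} [CommRing R] {M : Type*} [AddCommGroup M] [Module R M]
    {t₁ t₂ : R} (ht₁ : IsSMulRegular M t₁) (ht₂ : IsSMulRegular M t₂)
    (ht₂₁ : IsSMulRegular (M ⧸ (Ideal.span {t₂} • ⊤ : Submodule R M)) t₁)
    (k l k' l' : ℕ) (u v : M)
    (h : (t₁ ^ k * t₂ ^ l) • u = (t₁ ^ k' * t₂ ^ l') • v) :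
    ∃ w, (t₁ ^ k * t₂ ^ l) • u = (t₁ ^ max k k' * t₂ ^ max l l') • w := by
  rcases le_total k k' with hk | hk
  · exact aux_max_le ht₁ ht₂ ht₂₁ k l k' l' hk u v h
  · obtain ⟨w, hw⟩ := aux_max_le ht₁ ht₂ ht₂₁ k' l' k l hk v u h.symm
    exact ⟨w, by rw [h, hw, max_comm k' k, max_comm l' l]⟩

section
variable {R : Type*} [CommRing R] {M : Type*} [AddCommGroup M] [Module R M]
  {L : Type*} [AddCommGroup L] [Module R L]

private lemma aux_L {t₁ t₂ : R} (ht₁ : IsSMulRegular M t₁) (ht₂ : IsSMulRegular M t₂)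
    (ht₂₁ : IsSMulRegular (M ⧸ (Ideal.span {t₂} • ⊤ : Submodule R M)) t₁)
    (e₁ e₂ : L ≃ₗ[R] L) (he₁ : ∀ x, e₁ x = t₁ • x) (he₂ : ∀ x, e₂ x = t₂ • x)
    (ι : M →ₗ[R] L) (hι : Function.Injective ι) (a b a' b' : ℤ) :
    Submodule.map ((e₁ ^ (-a) * e₂ ^ (-b) : L ≃ₗ[R] L).toLinearMap) (LinearMap.range ι) ⊓
      Submodule.map ((e₁ ^ (-a') * e₂ ^ (-b') : L ≃ₗ[R] L).toLinearMap) (LinearMap.range ι) =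
    Submodule.map ((e₁ ^ (-min a a') * e₂ ^ (-min b b') : L ≃ₗ[R] L).toLinearMap)
      (LinearMap.range ι) := by
  have h12 : Commute e₁ e₂ := by
    apply LinearEquiv.ext; intro x
    show e₁ (e₂ x) = e₂ (e₁ x)
    simp only [he₁, he₂]
    exact smul_comm _ _ _
  have hp1 : ∀ (c : ℕ) (x : L), (e₁ ^ c : L ≃ₗ[R] L) x = t₁ ^ c • x := by
    intro c; induction c with
    | zero => intro x; simp
    | succ c ih =>
      intro x
      rw [pow_succ]
      show (e₁ ^ c : L ≃ₗ[R] L) (e₁ x) = _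
      rw [he₁, ih, smul_smul, pow_succ]
  have hp2 : ∀ (d : ℕ) (x : L), (e₂ ^ d : L ≃ₗ[R] L) x = t₂ ^ d • x := by
    intro d; induction d with
    | zero => intro x; simp
    | succ d ih =>
      intro x
      rw [pow_succ]
      show (e₂ ^ d : L ≃ₗ[R] L) (e₂ x) = _
      rw [he₂, ih, smul_smul, pow_succ]
  have hap : ∀ (c d : ℕ) (x : L), ((e₁ ^ c * e₂ ^ d : L ≃ₗ[R] L)) x = (t₁ ^ c * t₂ ^ d) • x := by
    intro c d x
    show (e₁ ^ c : L ≃ₗ[R] L) ((e₂ ^ d : L ≃ₗ[R] L) x) = _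
    rw [hp2, hp1, smul_smul]
  have hmapmul : ∀ (E F : L ≃ₗ[R] L) (P : Submodule R L),
      Submodule.map (E * F).toLinearMap P
        = Submodule.map E.toLinearMap (Submodule.map F.toLinearMap P) := by
    intro E F P
    rw [show (E * F).toLinearMap = E.toLinearMap ∘ₗ F.toLinearMap from rfl, Submodule.map_comp]
  have hmono : ∀ (c d : ℕ),
      Submodule.map ((e₁ ^ c * e₂ ^ d : L ≃ₗ[R] L)).toLinearMap (LinearMap.range ι)
        ≤ LinearMap.range ι := by
    rintro c d x hx
    obtain ⟨y, ⟨m, rfl⟩, rfl⟩ := hx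
    exact ⟨(t₁ ^ c * t₂ ^ d) • m, by rw [map_smul]; exact (hap c d (ι m)).symm⟩
  have Lmax : ∀ k l k' l' : ℕ,
      Submodule.map ((e₁ ^ k * e₂ ^ l : L ≃ₗ[R] L)).toLinearMap (LinearMap.range ι) ⊓
        Submodule.map ((e₁ ^ k' * e₂ ^ l' : L ≃ₗ[R] L)).toLinearMap (LinearMap.range ι) =
      Submodule.map ((e₁ ^ max k k' * e₂ ^ max l l' : L ≃ₗ[R] L)).toLinearMap
        (LinearMap.range ι) := by
    have hsplit : ∀ (c c' d d' : ℕ), (e₁ ^ (c + c') * e₂ ^ (d + d') : L ≃ₗ[R] L)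
        = (e₁ ^ c * e₂ ^ d) * (e₁ ^ c' * e₂ ^ d') := by
      intro c c' d d'
      apply LinearEquiv.ext; intro x
      show _ = (e₁ ^ c * e₂ ^ d : L ≃ₗ[R] L) ((e₁ ^ c' * e₂ ^ d' : L ≃ₗ[R] L) x)
      rw [hap, hap, hap, smul_smul]
      congr 1; ring
    intro k l k' l'
    apply le_antisymm
    · rintro x ⟨hx1, hx2⟩
      obtain ⟨y, ⟨u, rfl⟩, rfl⟩ := hx1
      obtain ⟨z, ⟨v, hv⟩, hz⟩ := hx2
      simp only [LinearEquiv.coe_coe] at hz ⊢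
      have hAB : (t₁ ^ k * t₂ ^ l) • u = (t₁ ^ k' * t₂ ^ l') • v := by
        apply hι
        rw [map_smul, map_smul, ← hap, ← hap, hv]
        exact hz.symm
      obtain ⟨w, hw⟩ := aux_max ht₁ ht₂ ht₂₁ k l k' l' u v hAB
      refine ⟨ι w, ⟨w, rfl⟩, ?_⟩
      simp only [LinearEquiv.coe_coe]
      rw [hap, ← map_smul, ← hw, map_smul, ← hap]
    · refine le_inf ?_ ?_
      · have e1 : max k k' = k + (max k k' - k) := (Nat.add_sub_cancel' (le_max_left k k')).symm
        have e2 : max l l' = l + (max l l' - l) := (Nat.add_sub_cancel' (le_max_left l l')).symm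
        rw [e1, e2, hsplit, hmapmul]
        exact Submodule.map_mono (hmono _ _)
      · have e1 : max k k' = k' + (max k k' - k') := (Nat.add_sub_cancel' (le_max_right k k')).symm
        have e2 : max l l' = l' + (max l l' - l') := (Nat.add_sub_cancel' (le_max_right l l')).symm
        rw [e1, e2, hsplit, hmapmul]
        exact Submodule.map_mono (hmono _ _)
  have h21 : ∀ (x y : ℤ), e₂ ^ x * e₁ ^ y = e₁ ^ y * e₂ ^ x := fun x y =>
    ((h12.zpow_zpow y x).symm).eq
  have hzsplit : ∀ (c d : ℤ) (k l : ℕ), (k : ℤ) = max a a' - c → (l : ℤ) = max b b' - d →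
      (e₁ ^ (-c) * e₂ ^ (-d) : L ≃ₗ[R] L)
        = (e₁ ^ (-max a a') * e₂ ^ (-max b b')) * ((e₁ ^ k * e₂ ^ l : L ≃ₗ[R] L)) := by
    intro c d k l hkc hld
    rw [show ((e₁ ^ k * e₂ ^ l : L ≃ₗ[R] L)) = e₁ ^ (k : ℤ) * e₂ ^ (l : ℤ) by
      rw [zpow_natCast, zpow_natCast], hkc, hld]
    conv_rhs => rw [mul_assoc, ← mul_assoc (e₂ ^ (-max b b')), h21, mul_assoc,
      ← mul_assoc, ← zpow_add, ← zpow_add]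
    rw [show -max a a' + (max a a' - c) = -c by ring, show -max b b' + (max b b' - d) = -d by ring]
  have hmap3 : ∀ (c d : ℤ) (k l : ℕ), (k : ℤ) = max a a' - c → (l : ℤ) = max b b' - d →
      Submodule.map ((e₁ ^ (-c) * e₂ ^ (-d) : L ≃ₗ[R] L).toLinearMap) (LinearMap.range ι)
        = Submodule.map ((e₁ ^ (-max a a') * e₂ ^ (-max b b') : L ≃ₗ[R] L)).toLinearMap
            (Submodule.map ((e₁ ^ k * e₂ ^ l : L ≃ₗ[R] L)).toLinearMap (LinearMap.range ι)) := by
    intro c d k l hkc hld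
    rw [hzsplit c d k l hkc hld, hmapmul]
  have hk : ((max a a' - a).toNat : ℤ) = max a a' - a := Int.toNat_of_nonneg (by omega)
  have hk' : ((max a a' - a').toNat : ℤ) = max a a' - a' := Int.toNat_of_nonneg (by omega)
  have hl : ((max b b' - b).toNat : ℤ) = max b b' - b := Int.toNat_of_nonneg (by omega)
  have hl' : ((max b b' - b').toNat : ℤ) = max b b' - b' := Int.toNat_of_nonneg (by omega)
  have hkm : ((max (max a a' - a).toNat (max a a' - a').toNat : ℕ) : ℤ)
      = max a a' - min a a' := by push_cast; omega
  have hlm : ((max (max b b' - b).toNat (max b b' - b').toNat : ℕ) : ℤ)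
      = max b b' - min b b' := by push_cast; omega
  rw [hmap3 a b _ _ hk hl, hmap3 a' b' _ _ hk' hl',
    hmap3 (min a a') (min b b') _ _ hkm hlm,
    ← Submodule.map_inf ((e₁ ^ (-max a a') * e₂ ^ (-max b b') : L ≃ₗ[R] L)).toLinearMap
      (fun x y hxy => (e₁ ^ (-max a a') * e₂ ^ (-max b b') : L ≃ₗ[R] L).injective hxy),
    Lmax]

end

/-- Let `M` be a module over a commutative ring and `t₁, t₂` two elements
forming a regular sequence on `M` in both orders, with each `t_i` a nonzerodivisor on
`M`.  Then in the localization `M[1/(t₁t₂)]` (into which `M` embeds), for all integers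
`a, b, a', b'` one has
`t₁^{-a}t₂^{-b}M ∩ t₁^{-a'}t₂^{-b'}M = t₁^{-min(a,a')}t₂^{-min(b,b')}M`,
where `t_i^{-c}M` denotes the image submodule of `M` under the (bijective)
multiplication by `t_i` raised to the power `-c`.

This is the two-variable `V`-compatibility for the multi-indexed Kashiwara–Malgrange
filtration in Proposition 2.5. -/
theorem stmt_19 {R : Type*} [CommRing R] {M : Type*} [AddCommGroup M] [Module R M]
    (t₁ t₂ : R)
    -- each `t_i` is a nonzerodivisor on `M`
    (ht₁ : IsSMulRegular M t₁) (ht₂ : IsSMulRegular M t₂)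
    -- `t₁, t₂` is a regular sequence on `M` in both orders
    (ht₁₂ : IsSMulRegular (M ⧸ (Ideal.span {t₁} • ⊤ : Submodule R M)) t₂)
    (ht₂₁ : IsSMulRegular (M ⧸ (Ideal.span {t₂} • ⊤ : Submodule R M)) t₁)
    -- multiplication by `t₁` and by `t₂` are bijective on `M[1/(t₁t₂)]`
    (hbij₁ : Function.Bijective
      (LinearMap.lsmul R (LocalizedModule (Submonoid.powers (t₁ * t₂)) M) t₁))
    (hbij₂ : Function.Bijective
      (LinearMap.lsmul R (LocalizedModule (Submonoid.powers (t₁ * t₂)) M) t₂)) :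
    letI L := LocalizedModule (Submonoid.powers (t₁ * t₂)) M
    letI e₁ : L ≃ₗ[R] L := LinearEquiv.ofBijective (LinearMap.lsmul R L t₁) hbij₁
    letI e₂ : L ≃ₗ[R] L := LinearEquiv.ofBijective (LinearMap.lsmul R L t₂) hbij₂
    -- the submodule `M ⊆ M[1/(t₁t₂)]`
    letI M₀ : Submodule R L :=
      LinearMap.range (LocalizedModule.mkLinearMap (Submonoid.powers (t₁ * t₂)) M)
    -- `N a b = t₁^{-a}t₂^{-b}·M`
    letI N : ℤ → ℤ → Submodule R L := fun a b =>
      Submodule.map ((e₁ ^ (-a) * e₂ ^ (-b) : L ≃ₗ[R] L).toLinearMap) M₀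
    ∀ a b a' b' : ℤ, N a b ⊓ N a' b' = N (min a a') (min b b') := by
  intro a b a' b'
  have hι : Function.Injective (LocalizedModule.mkLinearMap (Submonoid.powers (t₁ * t₂)) M) := by
    intro u v huv
    simp only [LocalizedModule.mkLinearMap_apply] at huv
    obtain ⟨c, hc⟩ := LocalizedModule.mk_eq.mp huv
    obtain ⟨j, hj⟩ := c.2
    have hj' : (t₁ * t₂) ^ j = (c : R) := hj
    simp only [one_smul] at hc
    exact (ht₁.mul ht₂).pow j (show (t₁ * t₂) ^ j • u = (t₁ * t₂) ^ j • v from by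
      rw [hj']; simpa only [Submonoid.smul_def] using hc)
  exact aux_L ht₁ ht₂ ht₂₁
    (LinearEquiv.ofBijective (LinearMap.lsmul R _ t₁) hbij₁)
    (LinearEquiv.ofBijective (LinearMap.lsmul R _ t₂) hbij₂)
    (fun x => rfl) (fun x => rfl)
    (LocalizedModule.mkLinearMap (Submonoid.powers (t₁ * t₂)) M) hι a b a' b'
end
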